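/- arXiv:2401.07189 — 4 statements merged into one kernel-verified Lean document; each statement's English description precedes it below -/
import Mathlib

section
/- Let K be a field, λ₁, …, λ_k pairwise distinct nonzero elements of K, and a₁, …, a_k, b₁, …, b_k ∈ K. Suppose that for every integer m ≥ 1 one has (∑_i λ_i^m a_i)·(∑_j λ_j b_j) = (∑_i λ_i^m b_i)·(∑_j λ_j a_j). Then for every index i, a_i·(∑_j λ_j b_j) = b_i·(∑_j λ_j a_j). -/
/-- Rational-function / partial-fractions step: if the generating functions at two
points agree for all powers m ≥ 1, the coefficient vectors are proportional. -/
theorem stmt1 {K : Type*} [Field K] {k : ℕ}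
    (lam a b : Fin k → K)
    (hne : ∀ i, lam i ≠ 0)
    (hdist : ∀ i j, i ≠ j → lam i ≠ lam j)
    (h : ∀ m : ℕ, 1 ≤ m →
      (∑ i, lam i ^ m * a i) * (∑ j, lam j * b j)
        = (∑ i, lam i ^ m * b i) * (∑ j, lam j * a j)) :
    ∀ i, a i * (∑ j, lam j * b j) = b i * (∑ j, lam j * a j) := by
  set A := ∑ j, lam j * a j with hA
  set B := ∑ j, lam j * b j with hB
  set c : Fin k → K := fun i => lam i * (a i * B - b i * A) with hc
  have hM : ((Matrix.vandermonde lam).transpose).mulVec c = 0 := by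
    funext m
    simp only [Matrix.mulVec, dotProduct, Matrix.transpose_apply,
      Matrix.vandermonde_apply, Pi.zero_apply, hc]
    have := h (m + 1) (Nat.le_add_left 1 m)
    have : ∑ j, lam j ^ (m : ℕ) * (lam j * (a j * B - b j * A)) =
        (∑ i, lam i ^ ((m:ℕ)+1) * a i) * B - (∑ i, lam i ^ ((m:ℕ)+1) * b i) * A := by
      rw [Finset.sum_mul, Finset.sum_mul, ← Finset.sum_sub_distrib]
      congr 1; funext j; ring
    rw [this, h ((m:ℕ)+1) (Nat.le_add_left 1 m), sub_self]
  have hdet : ((Matrix.vandermonde lam).transpose).det ≠ 0 := by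
    rw [Matrix.det_transpose, Matrix.det_vandermonde]
    exact Finset.prod_ne_zero_iff.2 fun i _ => Finset.prod_ne_zero_iff.2
      fun j hj => sub_ne_zero.2 fun hEq =>
        hdist j i (Finset.mem_Ioi.1 hj).ne' hEq
  have hcz : c = 0 := by
    have hinj := Matrix.mulVec_injective_iff_isUnit.2
      (Matrix.isUnit_iff_isUnit_det _ |>.2 (Ne.isUnit hdet))
    have : ((Matrix.vandermonde lam).transpose).mulVec c = ((Matrix.vandermonde lam).transpose).mulVec 0 := by
      rw [hM, Matrix.mulVec_zero]
    exact hinj this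
  intro i
  have := congrFun hcz i
  simp only [hc, Pi.zero_apply] at this
  have h2 : a i * B - b i * A = 0 := by
    rcases mul_eq_zero.1 this with h' | h'
    · exact absurd h' (hne i)
    · exact h'
  exact sub_eq_zero.1 h2
end

section
/- Let K be a field, λ₁, …, λ_k pairwise distinct nonzero elements of K, G a set with a distinguished element e, and f₁, …, f_k : G → K functions. Assume: (1) for every integer m ≥ 1 there exists c_m ∈ K such that ∑_i λ_i^m f_i(g) = c_m · ∑_i λ_i f_i(g) for all g ∈ G; (2) ∑_i λ_i f_i(e) ≠ 0; (3) ∑_i f_i(e) ≠ 0. Then there exists c ∈ K such that ∑_i λ_i f_i(g) = c · ∑_i f_i(g) for all g ∈ G. Moreover, for every i and every g ∈ G, f_i(g) · ∑_j λ_j f_j(e) = f_i(e) · ∑_j λ_j f_j(g). -/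
/-- Elementary core of Theorem 8.3: if all the twisted trace functions
∑ λᵢ^m fᵢ are proportional to ∑ λᵢ fᵢ, and the latter and ∑ fᵢ are nonzero at e,
then ∑ λᵢ fᵢ is a scalar multiple of ∑ fᵢ, and each fᵢ is proportional to its
value at e. -/
theorem stmt2 {K : Type*} [Field K] {k : ℕ} {G : Type*} (e : G)
    (lam : Fin k → K) (f : Fin k → G → K)
    (hne : ∀ i, lam i ≠ 0)
    (hdist : ∀ i j, i ≠ j → lam i ≠ lam j)
    (h1 : ∀ m : ℕ, 1 ≤ m → ∃ c : K, ∀ g : G,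
      ∑ i, lam i ^ m * f i g = c * ∑ i, lam i * f i g)
    (h2 : (∑ i, lam i * f i e) ≠ 0)
    (h3 : (∑ i, f i e) ≠ 0) :
    (∃ c : K, ∀ g : G, ∑ i, lam i * f i g = c * ∑ i, f i g) ∧
    (∀ i, ∀ g : G,
      f i g * (∑ j, lam j * f j e) = f i e * (∑ j, lam j * f j g)) := by
  have hinj : Function.Injective lam := fun i j h => by
    by_contra hij; exact hdist i j hij h
  -- main claim: each f_i is proportional to its value at e
  have key : ∀ i, ∀ g : G,
      f i g * (∑ j, lam j * f j e) = f i e * (∑ j, lam j * f j g) := by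
    intro i g
    set Se := ∑ j, lam j * f j e with hSe
    set Sg := ∑ j, lam j * f j g with hSg
    have hsum : ∀ m : ℕ, 1 ≤ m →
        ∑ j, lam j ^ m * (f j g * Se - f j e * Sg) = 0 := by
      intro m hm
      obtain ⟨c, hc⟩ := h1 m hm
      have hg := hc g
      have he := hc e
      have : ∑ j, lam j ^ m * (f j g * Se - f j e * Sg)
          = (∑ j, lam j ^ m * f j g) * Se - (∑ j, lam j ^ m * f j e) * Sg := by
        simp only [mul_sub, Finset.sum_sub_distrib, Finset.sum_mul]
        congr 1 <;> (apply Finset.sum_congr rfl; intro j _; ring)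
      rw [this, hg, he]
      ring
    have hv : (fun j => lam j * (f j g * Se - f j e * Sg)) = 0 := by
      apply Matrix.eq_zero_of_forall_pow_sum_mul_pow_eq_zero hinj
      intro m
      have := hsum ((m : ℕ) + 1) (Nat.le_add_left 1 m)
      rw [← this]
      apply Finset.sum_congr rfl
      intro j _
      ring
    have := congrFun hv i
    have h0 : lam i * (f i g * Se - f i e * Sg) = 0 := this
    rcases mul_eq_zero.mp h0 with h | h
    · exact absurd h (hne i)
    · exact sub_eq_zero.mp h
  refine ⟨⟨(∑ j, lam j * f j e) / (∑ j, f j e), fun g => ?_⟩, key⟩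
  -- sum the key identity over i
  have := Finset.sum_congr rfl (fun i (_ : i ∈ Finset.univ) => key i g)
  rw [← Finset.sum_mul, ← Finset.sum_mul] at this
  field_simp
  linear_combination -this
end

section
/- Let R be a commutative ring, n ≥ 1, and t = diag(t₁, …, t_n) a diagonal matrix with each t_i ∈ Rˣ such that t_i⁻¹·t_j − 1 ∈ Rˣ for all i < j. Let U denote the group of upper unitriangular n×n matrices over R. Then the map U → U given by v ↦ t⁻¹ · v · t · v⁻¹ is a bijection. -/
open Finset Matrix

section aux
variable {R : Type*} [CommRing R] {n : ℕ}

/-- recursive construction of the preimage -/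
noncomputable def vdef (u : Matrix (Fin n) (Fin n) R) (cinv : Fin n → Fin n → R) :
    Fin n → Fin n → R
  | i, j =>
    if i = j then 1
    else if hij : i < j then
      cinv i j * ∑ k ∈ (Finset.Ioc i j).attach, u i k.1 * vdef u cinv k.1 j
    else 0
termination_by i j => j.val - i.val
decreasing_by
  have hk := Finset.mem_Ioc.mp k.2
  exact Nat.sub_lt_sub_left hij hk.1

variable {u : Matrix (Fin n) (Fin n) R} {cinv : Fin n → Fin n → R}

lemma vdef_diag (i : Fin n) : vdef u cinv i i = 1 := by rw [vdef]; simp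

lemma vdef_lower {i j : Fin n} (h : j < i) : vdef u cinv i j = 0 := by
  rw [vdef]; rw [if_neg (by exact fun e => absurd e.symm h.ne), dif_neg (asymm h)]

lemma vdef_upper {i j : Fin n} (h : i < j) :
    vdef u cinv i j = cinv i j * ∑ k ∈ Finset.Ioc i j, u i k * vdef u cinv k j := by
  rw [vdef]; rw [if_neg h.ne, dif_pos h, ← Finset.sum_attach (Finset.Ioc i j)
    (fun k => u i k * vdef u cinv k j)]

/-- lower part of product of triangulars vanishes -/
lemma tri_sum_zero {A B : Matrix (Fin n) (Fin n) R}
    (hA : ∀ i k, k < i → A i k = 0) (hB : ∀ k j, j < k → B k j = 0)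
    {i j : Fin n} (h : j < i) : ∑ k, A i k * B k j = 0 := by
  apply Finset.sum_eq_zero
  intro k _
  rcases lt_or_ge k i with hk | hk
  · rw [hA i k hk, zero_mul]
  · rw [hB k j (lt_of_lt_of_le h hk), mul_zero]

/-- triangular sum splitting for i ≤ j -/
lemma tri_sum_split {A B : Matrix (Fin n) (Fin n) R}
    (hA : ∀ i k, k < i → A i k = 0) (hB : ∀ k j, j < k → B k j = 0)
    {i j : Fin n} (h : i ≤ j) :
    ∑ k, A i k * B k j = A i i * B i j + ∑ k ∈ Finset.Ioc i j, A i k * B k j := by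
  have h1 : ∑ k ∈ Finset.Icc i j, A i k * B k j = ∑ k, A i k * B k j := by
    apply Finset.sum_subset (Finset.subset_univ _)
    intro k _ hk
    rw [Finset.mem_Icc, not_and_or] at hk
    rcases hk with hk | hk
    · rw [hA i k (lt_of_not_ge hk), zero_mul]
    · rw [hB k j (lt_of_not_ge hk), mul_zero]
  rw [← h1, Finset.Icc_eq_cons_Ioc h, Finset.sum_cons]

lemma tri_mul_diag {A B : Matrix (Fin n) (Fin n) R}
    (hA : ∀ i k, k < i → A i k = 0) (hB : ∀ k j, j < k → B k j = 0)
    (i : Fin n) : (A * B) i i = A i i * B i i := by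
  rw [Matrix.mul_apply, tri_sum_split hA hB le_rfl, Finset.Ioc_self, Finset.sum_empty, add_zero]

/-- main equation satisfied by vdef -/
lemma vdef_eqn {c : Fin n → Fin n → R}
    (hud : ∀ i, u i i = 1) (hul : ∀ i j : Fin n, j < i → u i j = 0)
    (hcd : ∀ i, c i i = 1)
    (hc : ∀ i j : Fin n, i < j → (c i j - 1) * cinv i j = 1) (i j : Fin n) :
    c i j * vdef u cinv i j = ∑ k, u i k * vdef u cinv k j := by
  rcases lt_trichotomy i j with h | h | h
  · rw [tri_sum_split hul (fun k j' h' => vdef_lower h') h.le, hud, one_mul,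
      vdef_upper h]
    have hcc : c i j * cinv i j = cinv i j + 1 := by linear_combination hc i j h
    calc c i j * (cinv i j * ∑ k ∈ Finset.Ioc i j, u i k * vdef u cinv k j)
        = (c i j * cinv i j) * ∑ k ∈ Finset.Ioc i j, u i k * vdef u cinv k j := by ring
      _ = _ := by rw [hcc]; ring
  · subst h
    rw [tri_sum_split hul (fun k j' h' => vdef_lower h') le_rfl, hud, one_mul,
      Finset.Ioc_self, Finset.sum_empty, add_zero, hcd, one_mul]
  · rw [vdef_lower h, mul_zero, tri_sum_zero hul (fun k j' h' => vdef_lower h') h]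


/-- uniqueness of solutions of the entrywise equation -/
lemma tri_uniq {c : Fin n → Fin n → R} {v v' : Matrix (Fin n) (Fin n) R}
    (hud : ∀ i, u i i = 1) (hul : ∀ i j : Fin n, j < i → u i j = 0)
    (hc : ∀ i j : Fin n, i < j → IsUnit (c i j - 1))
    (hvd : ∀ i, v i i = 1) (hvl : ∀ i j : Fin n, j < i → v i j = 0)
    (hvd' : ∀ i, v' i i = 1) (hvl' : ∀ i j : Fin n, j < i → v' i j = 0)
    (e : ∀ i j, c i j * v i j = ∑ k, u i k * v k j)
    (e' : ∀ i j, c i j * v' i j = ∑ k, u i k * v' k j) :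
    v = v' := by
  have key : ∀ d : ℕ, ∀ i j : Fin n, j.val - i.val ≤ d → v i j = v' i j := by
    intro d
    induction d with
    | zero =>
      intro i j hij
      rcases lt_trichotomy i j with h | h | h
      · omega
      · subst h; rw [hvd, hvd']
      · rw [hvl i j h, hvl' i j h]
    | succ d ih =>
      intro i j hij
      rcases lt_trichotomy i j with h | h | h
      · have hIoc : ∀ k ∈ Finset.Ioc i j, v k j = v' k j := by
          intro k hk
          rw [Finset.mem_Ioc] at hk
          exact ih k j (by omega)
        have ev := e i j
        have ev' := e' i j
        rw [tri_sum_split hul hvl h.le, hud, one_mul] at ev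
        rw [tri_sum_split hul hvl' h.le, hud, one_mul] at ev'
        have hsum : ∑ k ∈ Finset.Ioc i j, u i k * v k j
            = ∑ k ∈ Finset.Ioc i j, u i k * v' k j :=
          Finset.sum_congr rfl fun k hk => by rw [hIoc k hk]
        have : (c i j - 1) * (v i j - v' i j) = 0 := by
          linear_combination ev - ev' + hsum
        have h0 : v i j - v' i j = 0 :=
          (hc i j h).mul_left_cancel (by rw [mul_zero]; exact this)
        exact sub_eq_zero.mp h0
      · subst h; rw [hvd, hvd']
      · rw [hvl i j h, hvl' i j h]
  ext i j
  exact key (j.val - i.val) i j le_rfl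

/-- unitriangular matrices have determinant one -/
lemma tri_det {v : Matrix (Fin n) (Fin n) R}
    (hvd : ∀ i, v i i = 1) (hvl : ∀ i j : Fin n, j < i → v i j = 0) :
    v.det = 1 := by
  rw [Matrix.det_of_upperTriangular (fun i j h => hvl i j h)]
  simp [hvd]

/-- the inverse of a unitriangular matrix is unitriangular -/
lemma tri_inv {v : Matrix (Fin n) (Fin n) R}
    (hvd : ∀ i, v i i = 1) (hvl : ∀ i j : Fin n, j < i → v i j = 0) :
    (∀ i, v⁻¹ i i = 1) ∧ ∀ i j : Fin n, j < i → v⁻¹ i j = 0 := by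
  have hdet : IsUnit v.det := by rw [tri_det hvd hvl]; exact isUnit_one
  have : Invertible v := v.invertibleOfIsUnitDet hdet
  have hbt : v.BlockTriangular id := fun i j h => hvl i j h
  have hinv := Matrix.blockTriangular_inv_of_blockTriangular hbt
  have hl : ∀ i j : Fin n, j < i → v⁻¹ i j = 0 := fun i j h => hinv h
  refine ⟨fun i => ?_, hl⟩
  have h1 : (v⁻¹ * v) i i = 1 := by rw [Matrix.nonsing_inv_mul v hdet]; simp
  rw [tri_mul_diag hl hvl, hvd, mul_one] at h1
  exact h1

end aux


/-- Very regular elements (Lemma 6.1): if t = diag(t₁,…,tₙ) with tᵢ⁻¹tⱼ − 1 a unit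
for i < j, then v ↦ t⁻¹ · v · t · v⁻¹ is a bijection of the group of upper
unitriangular matrices onto itself. -/
theorem stmt10 {R : Type*} [CommRing R] {n : ℕ} (hn : 1 ≤ n)
    (t : Fin n → Rˣ)
    (ht : ∀ i j : Fin n, i < j → IsUnit ((((t i)⁻¹ * t j : Rˣ) : R) - 1)) :
    Set.BijOn
      (fun v : Matrix (Fin n) (Fin n) R =>
        Matrix.diagonal (fun i => (((t i)⁻¹ : Rˣ) : R)) * v *
          Matrix.diagonal (fun i => ((t i : Rˣ) : R)) * v⁻¹)
      {v : Matrix (Fin n) (Fin n) R | (∀ i, v i i = 1) ∧ ∀ i j : Fin n, j < i → v i j = 0}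
      {v : Matrix (Fin n) (Fin n) R | (∀ i, v i i = 1) ∧ ∀ i j : Fin n, j < i → v i j = 0} := by
  classical
  set S : Set (Matrix (Fin n) (Fin n) R) :=
    {v | (∀ i, v i i = 1) ∧ ∀ i j : Fin n, j < i → v i j = 0} with hS
  set Dinv : Matrix (Fin n) (Fin n) R := Matrix.diagonal (fun i => (((t i)⁻¹ : Rˣ) : R))
    with hDinv
  set D : Matrix (Fin n) (Fin n) R := Matrix.diagonal (fun i => ((t i : Rˣ) : R)) with hD
  set c : Fin n → Fin n → R := fun i j => (((t i)⁻¹ * t j : Rˣ) : R) with hcdef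
  have hcd : ∀ i, c i i = 1 := fun i => by simp [hcdef]
  -- entries of the diagonal conjugation
  have hconj : ∀ v : Matrix (Fin n) (Fin n) R, ∀ i j,
      (Dinv * v * D) i j = c i j * v i j := by
    intro v i j
    rw [hDinv, hD, Matrix.mul_diagonal, Matrix.diagonal_mul, hcdef]
    push_cast
    ring
  -- determinant of members
  have hdet : ∀ v ∈ S, IsUnit v.det := by
    intro v hv
    rw [tri_det hv.1 hv.2]
    exact isUnit_one
  -- MapsTo
  have hmaps : ∀ v ∈ S, Dinv * v * D * v⁻¹ ∈ S := by
    intro v hv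
    have hw : Dinv * v * D ∈ S := by
      constructor
      · intro i
        rw [hconj, hcd, one_mul, hv.1]
      · intro i j h
        rw [hconj, hv.2 i j h, mul_zero]
    obtain ⟨hid, hil⟩ := tri_inv hv.1 hv.2
    constructor
    · intro i
      rw [tri_mul_diag (fun i k hk => hw.2 i k hk) (fun k j hj => hil k j hj), hw.1, hid,
        mul_one]
    · intro i j h
      rw [Matrix.mul_apply]
      exact tri_sum_zero (fun i k hk => hw.2 i k hk) (fun k j hj => hil k j hj) h
  -- the basic equation transfer
  have hstep : ∀ v ∈ S, ∀ u : Matrix (Fin n) (Fin n) R,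
      Dinv * v * D * v⁻¹ = u → ∀ i j, c i j * v i j = ∑ k, u i k * v k j := by
    intro v hv u hu i j
    have h1 : Dinv * v * D = u * v := by
      rw [← hu, Matrix.mul_assoc (Dinv * v * D) v⁻¹ v, Matrix.nonsing_inv_mul v (hdet v hv),
        Matrix.mul_one]
    have := congrFun (congrFun h1 i) j
    rw [hconj, Matrix.mul_apply] at this
    exact this
  refine ⟨fun v hv => hmaps v hv, ?_, ?_⟩
  · -- injectivity
    intro v hv v' hv' heq
    simp only at heq
    set u := Dinv * v * D * v⁻¹ with hu
    have humem : u ∈ S := hmaps v hv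
    exact tri_uniq humem.1 humem.2 ht hv.1 hv.2 hv'.1 hv'.2
      (hstep v hv u rfl) (hstep v' hv' u heq.symm)
  · -- surjectivity
    intro u hu
    set cinv : Fin n → Fin n → R :=
      fun i j => if h : i < j then (((ht i j h).unit⁻¹ : Rˣ) : R) else 0 with hcinv
    have hc : ∀ i j : Fin n, i < j → (c i j - 1) * cinv i j = 1 := by
      intro i j h
      rw [hcinv]
      simp only [dif_pos h]
      have := (ht i j h).unit_spec
      calc (c i j - 1) * (((ht i j h).unit⁻¹ : Rˣ) : R)
          = ((ht i j h).unit : R) * (((ht i j h).unit⁻¹ : Rˣ) : R) := by rw [this]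
        _ = 1 := by rw [← Units.val_mul, mul_inv_cancel, Units.val_one]
    set v : Matrix (Fin n) (Fin n) R := Matrix.of (vdef u cinv) with hvdef
    have hvmem : v ∈ S :=
      ⟨fun i => vdef_diag i, fun i j h => vdef_lower h⟩
    have heqn : Dinv * v * D = u * v := by
      ext i j
      rw [hconj, Matrix.mul_apply]
      exact vdef_eqn hu.1 hu.2 hcd hc i j
    refine ⟨v, hvmem, ?_⟩
    simp only
    rw [heqn, Matrix.mul_assoc, Matrix.mul_nonsing_inv v (hdet v hvmem), Matrix.mul_one]
end

section
/- Let G be a group, σ : G → G an automorphism, B ≤ G a subgroup, n ≥ 1 an integer with σⁿ(B) = B, and g ∈ G with σ(g) = g. Write B^{(i)} = σ^{i−1}(B) for 1 ≤ i ≤ n+1 (so B^{(n+1)} = B). Let X be the set of tuples of cosets (h₁B^{(1)}, h₂B^{(2)}, …, h_{n+1}B^{(n+1)}) satisfying: (i) h_i⁻¹h_{i+1} ∈ B^{(i)}B^{(i+1)} for 1 ≤ i ≤ n; (ii) h_{n+1}⁻¹ g h₁ ∈ B; (iii) h₁B = g⁻¹σ(h_n)B; (iv) h_i B^{(i)} =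 σ(h_{i−1}) B^{(i)} for 2 ≤ i ≤ n+1. Then the map hB ↦ (hB^{(1)}, σ(h)B^{(2)}, …, σⁿ(h)B^{(n+1)}) is a bijection from {hB ∈ G/B : h⁻¹σ(h) ∈ B·σ(B) and σⁿ(h)⁻¹ g h ∈ B} onto X. -/
open Pointwise

section
variable {G : Type*} [Group G]

lemma iter_map_mul (σ : G ≃* G) (k : ℕ) (a b : G) :
    (⇑σ)^[k] (a * b) = (⇑σ)^[k] a * (⇑σ)^[k] b := by
  induction k with
  | zero => simp
  | succ k ih => simp [Function.iterate_succ_apply', ih, map_mul]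

lemma iter_map_inv (σ : G ≃* G) (k : ℕ) (a : G) :
    (⇑σ)^[k] a⁻¹ = ((⇑σ)^[k] a)⁻¹ := by
  induction k with
  | zero => simp
  | succ k ih => simp [Function.iterate_succ_apply', ih, map_inv]

lemma img_coset (σ : G ≃* G) (k : ℕ) (a : G) (S : Set G) :
    (⇑σ)^[k] '' ((a * ·) '' S) = ((⇑σ)^[k] a * ·) '' ((⇑σ)^[k] '' S) := by
  rw [← Set.image_comp, ← Set.image_comp]
  apply Set.image_congr
  intro x _
  simp [iter_map_mul]

lemma img_coset1 (σ : G ≃* G) (a : G) (S : Set G) :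
    ⇑σ '' ((a * ·) '' S) = (σ a * ·) '' (⇑σ '' S) := by
  simpa using img_coset σ 1 a S

lemma img_iter_succ (σ : G ≃* G) (k : ℕ) (S : Set G) :
    ⇑σ '' ((⇑σ)^[k] '' S) = (⇑σ)^[k + 1] '' S := by
  rw [← Set.image_comp, ← Function.iterate_succ']

lemma iterate_pred (σ : G ≃* G) {n : ℕ} (hn : 1 ≤ n) (a : G) :
    σ ((⇑σ)^[n - 1] a) = (⇑σ)^[n] a := by
  conv_rhs => rw [show n = n - 1 + 1 by omega]
  exact (Function.iterate_succ_apply' (⇑σ) (n - 1) a).symm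

lemma iter_img_mul (σ : G ≃* G) (k : ℕ) (S T : Set G) :
    (⇑σ)^[k] '' (S * T) = (⇑σ)^[k] '' S * (⇑σ)^[k] '' T := by
  induction k with
  | zero => simp
  | succ k ih =>
      rw [Function.iterate_succ', Set.image_comp, Set.image_comp, Set.image_comp, ih]
      exact Set.image_mul σ

def iterSub (σ : G ≃* G) (B : Subgroup G) : ℕ → Subgroup G
  | 0 => B
  | (k+1) => Subgroup.map σ.toMonoidHom (iterSub σ B k)

lemma coe_iterSub (σ : G ≃* G) (B : Subgroup G) :
    ∀ k, (iterSub σ B k : Set G) = (⇑σ)^[k] '' (B : Set G)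
  | 0 => by simp [iterSub]
  | (k+1) => by
      rw [iterSub, Function.iterate_succ', Set.image_comp, ← coe_iterSub σ B k]
      rfl

lemma mem_coset_iff (K : Subgroup G) (a x : G) :
    x ∈ (a * ·) '' (K : Set G) ↔ a⁻¹ * x ∈ K := by
  constructor
  · rintro ⟨k, hk, rfl⟩; simpa using hk
  · intro h; exact ⟨a⁻¹ * x, h, by group⟩

lemma coset_eq_iff (K : Subgroup G) (a b : G) :
    (a * ·) '' (K : Set G) = (b * ·) '' (K : Set G) ↔ a⁻¹ * b ∈ K := by
  constructor
  · intro h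
    have : b ∈ (a * ·) '' (K : Set G) := by
      rw [h, mem_coset_iff]; simp [one_mem]
    rwa [mem_coset_iff] at this
  · intro h
    ext x
    rw [mem_coset_iff, mem_coset_iff]
    constructor
    · intro hx
      have := mul_mem (inv_mem h) hx
      simpa [mul_assoc] using this
    · intro hx
      have := mul_mem h hx
      simpa [mul_assoc] using this

end

/-- Fixed-point identification (Y_g)^{σ_Y} ≅ Y_g' in the proof of Proposition 9.3.
Cosets hB^{(i)} (with B^{(i)} = σ^{i-1}(B), 1-indexed) are encoded as the subsets
h·σ^{i-1}(B) ⊆ G; a tuple is indexed by i : Fin (n+1), the paper's h_{i+1}. The map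
hB ↦ (hB^{(1)}, σ(h)B^{(2)}, …, σⁿ(h)B^{(n+1)}) is c ↦ (σ^i '' c)_i, and it is a
bijection from the set of cosets hB with h⁻¹σ(h) ∈ B·σ(B), σⁿ(h)⁻¹gh ∈ B onto the
set X of tuples satisfying conditions (i)–(iv). -/
theorem stmt11 {G : Type*} [Group G] (σ : G ≃* G) (B : Subgroup G)
    {n : ℕ} (hn : 1 ≤ n)
    (hBn : (⇑σ)^[n] '' (B : Set G) = (B : Set G))
    (g : G) (hg : σ g = g) :
    Set.BijOn (fun c : Set G => fun i : Fin (n + 1) => (⇑σ)^[(i : ℕ)] '' c)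
      {c : Set G | ∃ h : G,
        h⁻¹ * σ h ∈ (B : Set G) * (⇑σ '' (B : Set G)) ∧
        ((⇑σ)^[n] h)⁻¹ * g * h ∈ B ∧
        c = (h * ·) '' (B : Set G)}
      {v : Fin (n + 1) → Set G | ∃ h : Fin (n + 1) → G,
        (∀ i : Fin (n + 1), v i = (h i * ·) '' ((⇑σ)^[(i : ℕ)] '' (B : Set G))) ∧
        (∀ i : Fin n, (h i.castSucc)⁻¹ * h i.succ ∈
          ((⇑σ)^[(i : ℕ)] '' (B : Set G)) * ((⇑σ)^[(i : ℕ) + 1] '' (B : Set G))) ∧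
        ((h (Fin.last n))⁻¹ * g * h 0 ∈ B) ∧
        ((h 0 * ·) '' (B : Set G)
          = ((g⁻¹ * σ (h ⟨n - 1, by omega⟩)) * ·) '' (B : Set G)) ∧
        (∀ i : Fin n, (h i.succ * ·) '' ((⇑σ)^[(i : ℕ) + 1] '' (B : Set G))
          = (σ (h i.castSucc) * ·) '' ((⇑σ)^[(i : ℕ) + 1] '' (B : Set G)))} := by
  refine ⟨?_, ?_, ?_⟩
  · -- MapsTo
    rintro c ⟨h, h1, h2, rfl⟩
    refine ⟨fun i => (⇑σ)^[(i : ℕ)] h, ?_, ?_, ?_, ?_, ?_⟩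
    · intro i
      exact img_coset σ i h B
    · intro i
      simp only [Fin.coe_castSucc, Fin.val_succ]
      have e : ((⇑σ)^[(i : ℕ)] h)⁻¹ * (⇑σ)^[(i : ℕ) + 1] h
          = (⇑σ)^[(i : ℕ)] (h⁻¹ * σ h) := by
        rw [iter_map_mul, iter_map_inv, Function.iterate_succ_apply]
      rw [e]
      have e2 : ((⇑σ)^[(i : ℕ)] '' (B : Set G)) * ((⇑σ)^[(i : ℕ) + 1] '' (B : Set G))
          = (⇑σ)^[(i : ℕ)] '' ((B : Set G) * (⇑σ '' (B : Set G))) := by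
        rw [iter_img_mul]
        congr 1
        rw [Function.iterate_succ, Set.image_comp]
      rw [e2]
      exact Set.mem_image_of_mem _ h1
    · simpa using h2
    · have e1 : σ ((⇑σ)^[n - 1] h) = (⇑σ)^[n] h := iterate_pred σ hn h
      simp only [Fin.val_zero, Function.iterate_zero_apply]
      rw [e1, coset_eq_iff]
      have := inv_mem h2
      simpa [mul_assoc] using this
    · intro i
      simp only [Fin.coe_castSucc, Fin.val_succ]
      rw [Function.iterate_succ_apply' (⇑σ) (i : ℕ) h]
  · -- InjOn
    intro c1 _ c2 _ hfe
    have := congrFun hfe (0 : Fin (n + 1))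
    simpa using this
  · -- SurjOn
    rintro v ⟨h, hv, hi, hii, hiii, hiv⟩
    have hv0 : v 0 = (h 0 * ·) '' (B : Set G) := by
      simpa using hv 0
    have key : ∀ k, ∀ hk : k < n + 1, v ⟨k, hk⟩ = (⇑σ)^[k] '' v 0 := by
      intro k
      induction k with
      | zero => intro hk; simp
      | succ k ih =>
          intro hk
          have hkn : k < n := by omega
          have step : v ⟨k + 1, hk⟩ = ⇑σ '' v ⟨k, by omega⟩ := by
            have e1 := hv (Fin.succ ⟨k, hkn⟩)
            have e2 := hv (Fin.castSucc ⟨k, hkn⟩)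
            have e3 := hiv ⟨k, hkn⟩
            simp only [Fin.val_succ, Fin.coe_castSucc] at e1 e2 e3
            have : v (Fin.succ ⟨k, hkn⟩) = ⇑σ '' v (Fin.castSucc ⟨k, hkn⟩) := by
              rw [e1, e2, e3, img_coset1]
              simp only [img_iter_succ]
            exact this
          rw [step, ih (by omega), img_iter_succ]
    refine ⟨v 0, ⟨h 0, ?_, ?_, hv0⟩, ?_⟩
    · -- h 0⁻¹ * σ (h 0) ∈ B * σ '' B
      have h1' := hi ⟨0, hn⟩
      have h2' := hiv ⟨0, hn⟩
      simp only [Fin.coe_castSucc, Fin.val_succ, zero_add, Function.iterate_zero,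
        Set.image_id, Function.iterate_one] at h1' h2'
      have cT1 : ((iterSub σ B 1 : Subgroup G) : Set G) = ⇑σ '' (B : Set G) := by
        rw [coe_iterSub]; simp
      rw [← cT1] at h2'
      rw [coset_eq_iff] at h2'
      have hc0 : (Fin.castSucc (⟨0, hn⟩ : Fin n)) = (0 : Fin (n + 1)) := rfl
      rw [hc0] at h1' h2'
      obtain ⟨b, hb, s, hs, hbs⟩ := h1'
      have hbs' : b * s = (h 0)⁻¹ * h (Fin.succ ⟨0, hn⟩) := hbs
      rw [← cT1] at hs
      have e : (h 0)⁻¹ * σ (h 0)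
          = b * (s * ((h (Fin.succ ⟨0, hn⟩))⁻¹ * σ (h 0))) := by
        rw [← mul_assoc, hbs']
        group
      rw [e]
      refine Set.mul_mem_mul hb ?_
      rw [← cT1]
      exact mul_mem hs h2'
    · -- (σ^[n] (h 0))⁻¹ * g * h 0 ∈ B
      set j : Fin (n + 1) := ⟨n - 1, by omega⟩ with hj
      have hA : v j = (⇑σ)^[n - 1] '' v 0 := key (n - 1) (by omega)
      rw [hv j, hv0, img_coset] at hA
      have hK : ((iterSub σ B (n - 1) : Subgroup G) : Set G)
          = (⇑σ)^[n - 1] '' (B : Set G) := coe_iterSub σ B (n - 1)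
      rw [← hK, coset_eq_iff] at hA
      have hb : ((⇑σ)^[n - 1] (h 0))⁻¹ * h j ∈ iterSub σ B (n - 1) := by
        have := inv_mem hA
        rwa [mul_inv_rev, inv_inv] at this
      have hσb : σ (((⇑σ)^[n - 1] (h 0))⁻¹ * h j) ∈ (B : Set G) := by
        have := Set.mem_image_of_mem ⇑σ (show _ ∈ ((iterSub σ B (n-1) : Subgroup G) : Set G) from hb)
        rw [hK, img_iter_succ, show n - 1 + 1 = n by omega, hBn] at this
        exact this
      have hσb' : ((⇑σ)^[n] (h 0))⁻¹ * σ (h j) ∈ (B : Set G) := by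
        have e : σ (((⇑σ)^[n - 1] (h 0))⁻¹ * h j)
            = ((⇑σ)^[n] (h 0))⁻¹ * σ (h j) := by
          rw [map_mul, map_inv, iterate_pred σ hn (h 0)]
        rwa [e] at hσb
      have hx : (h 0)⁻¹ * (g⁻¹ * σ (h j)) ∈ B := by
        have := hiii
        rw [coset_eq_iff] at this
        exact this
      have hx' : (σ (h j))⁻¹ * (g * h 0) ∈ B := by
        have := inv_mem hx
        simpa [mul_assoc] using this
      have e : ((⇑σ)^[n] (h 0))⁻¹ * g * h 0
          = (((⇑σ)^[n] (h 0))⁻¹ * σ (h j)) * ((σ (h j))⁻¹ * (g * h 0)) := by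
        group
      rw [e]
      exact mul_mem hσb' hx'
    · funext i
      exact (key (i : ℕ) i.isLt).symm
end
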